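/- There exist constants C>0 and δ>0 such that the following holds for every n, every sequence d=(d_1,…,d_n) of nonnegative integers with M=∑d_i even, every partition [n]=L∪R with M_1(R)≥M_1(L), and d_max^4≤δ·M: if T_1 and T_2 denote respectively the number of mixed triple pairs and the number of pure triple pairs of a uniformly random restricted pairing in M(L,R,d), then E[T_1] ≤ C·d_max^4/M and E[T_2] ≤ C·d_max^4/M. -/

import Mathlib

open Finset

namespace RandomBGraph

/-- The type of points: bucket `i` contains `d i` labelled points. -/
abbrev Pt (n : ℕ) (d : Fin n → ℕ) := Σ i : Fin n, Fin (d i)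

/-- Restricted pairings: perfect matchings (fixed-point-free involutions) of the points
in which no pair has both of its points in buckets belonging to `L`. -/
def restricted (n : ℕ) (d : Fin n → ℕ) (L : Finset (Fin n)) :
    Finset (Pt n d → Pt n d) :=
  Finset.univ.filter (fun f =>
    (∀ p, f (f p) = p) ∧ (∀ p, f p ≠ p) ∧ (∀ p : Pt n d, p.1 ∈ L → (f p).1 ∉ L))

variable {n : ℕ} {d : Fin n → ℕ}

/-- number of mixed triple pairs (each triple pair has 6 labelled representatives) -/
def numMixedTriples (L : Finset (Fin n)) (f : Pt n d → Pt n d) : ℕ :=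
  (Finset.univ.filter (fun t : Pt n d × Pt n d × Pt n d =>
    t.1 ≠ t.2.1 ∧ t.1 ≠ t.2.2 ∧ t.2.1 ≠ t.2.2 ∧
    t.1.1 = t.2.1.1 ∧ t.1.1 = t.2.2.1 ∧ t.1.1 ∈ L ∧ (f t.1).1 ∉ L ∧
    (f t.1).1 = (f t.2.1).1 ∧ (f t.1).1 = (f t.2.2).1)).card / 6

/-- number of pure triple pairs (each pure triple pair has 12 labelled representatives) -/
def numPureTriples (L : Finset (Fin n)) (f : Pt n d → Pt n d) : ℕ :=
  (Finset.univ.filter (fun t : Pt n d × Pt n d × Pt n d =>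
    t.1 ≠ t.2.1 ∧ t.1 ≠ t.2.2 ∧ t.2.1 ≠ t.2.2 ∧
    t.1.1 = t.2.1.1 ∧ t.1.1 = t.2.2.1 ∧ t.1.1 ∉ L ∧ (f t.1).1 ∉ L ∧
    (f t.1).1 = (f t.2.1).1 ∧ (f t.1).1 = (f t.2.2).1 ∧ (f t.1).1 ≠ t.1.1)).card / 12

/-- expectation with respect to the uniform distribution on a finite set -/
noncomputable def expec {α : Type*} (s : Finset α) (X : α → ℕ) : ℝ :=
  (∑ f ∈ s, (X f : ℝ)) / s.card

def M (n : ℕ) (d : Fin n → ℕ) : ℕ := ∑ i, d i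

def M1 (d : Fin n → ℕ) (S : Finset (Fin n)) : ℕ := ∑ i ∈ S, d i

def dmax (d : Fin n → ℕ) : ℕ := Finset.univ.sup d

/-
Switching: conjugating a restricted pairing by the transposition of two points in `R`-buckets
gives a restricted pairing. If `f p = q` with `q` in an `R`-bucket, conjugating by `swap q r`
re-matches `p` with `r`, and both `r` and `f` can be read off the result; so prescribing one more
pair, when `k` are already prescribed, costs a factor `M₁(R) - 2k`. As `M₁(R) ≥ M/2`, three
prescribed pairs have probability at most `(M₁(R) - 6)⁻³ ≤ (4/M)³` as soon as `M ≥ 24`.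
A labelled triple pair is given by three points of one bucket and their three partners in
another bucket, at most `(M d_max²)²` choices, whence `E[T] ≤ 64 d_max⁴ / M`.
-/

section Switching

variable {α : Type*} [DecidableEq α]

def swapConj (a b : α) (f : α → α) : α → α := Equiv.swap a b ∘ f ∘ Equiv.swap a b

@[simp]
theorem swapConj_apply (a b : α) (f : α → α) (x : α) :
    swapConj a b f x = Equiv.swap a b (f (Equiv.swap a b x)) := rfl

theorem swapConj_injective (a b : α) : Function.Injective (swapConj a b) := by
  intro f g h
  funext x
  simpa using congrArg (Equiv.swap a b) (congrFun h (Equiv.swap a b x))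

theorem card_filter_apply_eq_mul_card_le {p q : α} (hpq : p ≠ q) (S : Finset (α → α))
    {W : Finset α} (hpW : p ∉ W) (hS : ∀ f ∈ S, ∀ r ∈ W, swapConj q r f ∈ S) :
    #{f ∈ S | f p = q} * #W ≤ #S := by
  rw [← card_product]
  refine card_le_card_of_injOn (fun fr => swapConj q fr.2 fr.1) ?_ ?_
  · rintro ⟨f, r⟩ h
    simp only [coe_product, Set.mem_prod, mem_coe, mem_filter] at h
    exact hS f h.1.1 r h.2
  · rintro ⟨f, r⟩ h ⟨f', r'⟩ h' heq
    simp only [coe_product, Set.mem_prod, mem_coe, mem_filter] at h h' heq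
    -- the conjugate matches `p` with `r`, so `r` can be read off
    have hp : ∀ g s, g p = q → s ∈ W → swapConj q s g p = s := fun g s hg hs => by
      rw [swapConj_apply, Equiv.swap_apply_of_ne_of_ne hpq (ne_of_mem_of_not_mem hs hpW).symm,
        hg, Equiv.swap_apply_left]
    obtain rfl : r = r' := by
      rw [← hp f r h.1.2 h.2, ← hp f' r' h'.1.2 h'.2, heq]
    rw [swapConj_injective q r heq]

theorem card_filter_eqOn_mul_le (S : Finset (α → α)) (G : Finset α)
    (hS : ∀ f ∈ S, ∀ a ∈ G, ∀ b ∈ G, swapConj a b f ∈ S) (g : α → α)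
    (A : Finset α) (hinj : Set.InjOn g A) (hgG : ∀ a ∈ A, g a ∈ G)
    (hgA : ∀ a ∈ A, g a ∉ A) :
    #{f ∈ S | ∀ a ∈ A, f a = g a} * (#G - 2 * #A) ^ #A ≤ #S := by
  induction A using Finset.induction_on with
  | empty => simp
  | insert a A ha ih =>
    set S' := {f ∈ S | ∀ x ∈ A, f x = g x}
    set W := G \ insert a (A ∪ A.image g)
    have hS' : ∀ f ∈ S', ∀ r ∈ W, swapConj (g a) r f ∈ S' := by
      intro f hf r hr
      simp only [S', W, mem_filter, mem_sdiff, mem_insert, mem_union, mem_image, not_or]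
        at hf hr ⊢
      refine ⟨hS f hf.1 _ (hgG a (mem_insert_self a A)) r hr.1, fun x hx => ?_⟩
      have hxa : x ≠ g a := fun h => hgA a (mem_insert_self a A) (mem_insert_of_mem (h ▸ hx))
      have hgxa : g x ≠ g a := fun h =>
        ha (hinj (mem_insert_of_mem hx) (mem_insert_self a A) h ▸ hx)
      have hgxr : g x ≠ r := fun h => hr.2.2.2 ⟨x, hx, h⟩
      rw [swapConj_apply, Equiv.swap_apply_of_ne_of_ne hxa (ne_of_mem_of_not_mem hx hr.2.2.1),
        hf.2 x hx, Equiv.swap_apply_of_ne_of_ne hgxa hgxr]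
    have hstep := card_filter_apply_eq_mul_card_le
      (fun h : a = g a => hgA a (mem_insert_self a A) (h ▸ mem_insert_self a A)) S'
      (fun h => (mem_sdiff.1 h).2 (mem_insert_self _ _)) hS'
    have hW : #G - 2 * (#A + 1) ≤ #W := by
      have : #(insert a (A ∪ A.image g)) ≤ 2 * (#A + 1) := by
        grw [card_insert_le, card_union_le, card_image_le]; omega
      exact le_trans (by omega) (le_card_sdiff _ G)
    have hih := ih (hinj.mono (by simp)) (fun x hx => hgG x (mem_insert_of_mem hx))
      (fun x hx h => hgA x (mem_insert_of_mem hx) (mem_insert_of_mem h))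
    have hfilter : {f ∈ S | ∀ x ∈ insert a A, f x = g x} = {f ∈ S' | f a = g a} := by
      ext f
      simp only [S', mem_filter, forall_mem_insert]
      tauto
    rw [hfilter, card_insert_of_notMem ha, pow_succ, ← mul_assoc, mul_right_comm]
    calc #{f ∈ S' | f a = g a} * (#G - 2 * (#A + 1)) * (#G - 2 * (#A + 1)) ^ #A
        ≤ #S' * (#G - 2 * #A) ^ #A := by
          gcongr
          · exact (Nat.mul_le_mul_left _ hW).trans hstep
          · omega
      _ ≤ #S := hih

end Switching

theorem pt_ext {x y : Pt n d} (h₁ : x.1 = y.1) (h₂ : (x.2 : ℕ) = y.2) : x = y := by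
  obtain ⟨i, a⟩ := x
  obtain ⟨j, b⟩ := y
  cases h₁
  exact congrArg _ (Fin.ext h₂)

theorem card_pt : Fintype.card (Pt n d) = M n d := by
  simp [M]

theorem le_dmax (i : Fin n) : d i ≤ dmax d := le_sup (mem_univ i)

theorem one_le_dmax (h : 0 < M n d) : 1 ≤ dmax d := by
  by_contra! h0
  have : ∀ i, d i = 0 := fun i => by have := le_dmax (d := d) i; omega
  simp [M, this] at h

theorem involutive_of_mem_restricted {L : Finset (Fin n)} {f : Pt n d → Pt n d}
    (hf : f ∈ restricted n d L) : Function.Involutive f :=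
  (mem_filter.1 hf).2.1

theorem swapConj_mem_restricted {L : Finset (Fin n)} {f : Pt n d → Pt n d}
    (hf : f ∈ restricted n d L) {a b : Pt n d} (ha : a.1 ∉ L) (hb : b.1 ∉ L) :
    swapConj a b f ∈ restricted n d L := by
  simp only [restricted, mem_filter, mem_univ, true_and] at hf ⊢
  obtain ⟨hinv, hfix, hL⟩ := hf
  refine ⟨fun p => by simp [hinv], fun p hp => hfix (Equiv.swap a b p) ?_, fun p hp => ?_⟩
  · simpa using congrArg (Equiv.swap a b) hp
  · have hpa : p ≠ a := by rintro rfl; exact ha hp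
    have hpb : p ≠ b := by rintro rfl; exact hb hp
    rw [swapConj_apply, Equiv.swap_apply_of_ne_of_ne hpa hpb]
    rcases eq_or_ne (f p) a with h | h
    · simpa [h] using hb
    rcases eq_or_ne (f p) b with h' | h'
    · simpa [h'] using ha
    · rw [Equiv.swap_apply_of_ne_of_ne h h']
      exact hL p hp

def pointsOutside (d : Fin n → ℕ) (L : Finset (Fin n)) : Finset (Pt n d) := {x | x.1 ∉ L}

theorem M_le_two_mul_card_pointsOutside {L R : Finset (Fin n)} (hdisj : Disjoint L R)
    (hunion : L ∪ R = univ) (hLR : M1 d L ≤ M1 d R) :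
    M n d ≤ 2 * #(pointsOutside d L) := by
  have hR : univ \ L = R := by
    rw [← hunion, union_sdiff_left, sdiff_eq_self_of_disjoint hdisj.symm]
  have hcard : #(pointsOutside d L) = M1 d R := by
    calc #(pointsOutside d L)
        = #((univ \ L).sigma fun i => (univ : Finset (Fin (d i)))) := by
          congr 1
          ext x
          simp [pointsOutside]
      _ = M1 d R := by simp [card_sigma, M1, hR]
  have hM : M n d = M1 d L + M1 d R := by
    rw [M, M1, M1, ← sum_union hdisj, hunion]
  omega

def sameBucketTriples (d : Fin n → ℕ) : Finset (Pt n d × Pt n d × Pt n d) :=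
  {t | t.1.1 = t.2.1.1 ∧ t.1.1 = t.2.2.1}

theorem card_sameBucketTriples_le : #(sameBucketTriples d) ≤ M n d * dmax d ^ 2 := by
  calc #(sameBucketTriples d)
      ≤ #(univ : Finset (Pt n d × Fin (dmax d) × Fin (dmax d))) := by
        refine card_le_card_of_injOn
          (fun t => (t.1, Fin.castLE (le_dmax _) t.2.1.2, Fin.castLE (le_dmax _) t.2.2.2))
          (fun _ _ => mem_coe.2 (mem_univ _)) ?_
        rintro ⟨x, y, z⟩ h ⟨x', y', z'⟩ h' heq
        simp only [sameBucketTriples, coe_filter, mem_univ, true_and, Set.mem_ofPred_eq] at h h'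
        simp only [Prod.mk.injEq, Fin.ext_iff, Fin.val_castLE] at heq
        obtain ⟨rfl, hy, hz⟩ := heq
        simp only [Prod.mk.injEq, true_and]
        exact ⟨pt_ext (by rw [← h.1, ← h'.1]) hy, pt_ext (by rw [← h.2, ← h'.2]) hz⟩
    _ = M n d * dmax d ^ 2 := by
        rw [card_univ, Fintype.card_prod, Fintype.card_prod, Fintype.card_fin, card_pt, sq]

/-- The shape shared by the labelled representatives of mixed and of pure triple pairs. -/
def IsTriplePairAt (L : Finset (Fin n)) (f : Pt n d → Pt n d) (t : Pt n d × Pt n d × Pt n d) :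
    Prop :=
  t.1 ≠ t.2.1 ∧ t.1 ≠ t.2.2 ∧ t.2.1 ≠ t.2.2 ∧ t.1.1 = t.2.1.1 ∧ t.1.1 = t.2.2.1 ∧
    (f t.1).1 ∉ L ∧ (f t.1).1 = (f t.2.1).1 ∧ (f t.1).1 = (f t.2.2).1 ∧ (f t.1).1 ≠ t.1.1

instance (L : Finset (Fin n)) (f : Pt n d → Pt n d) : DecidablePred (IsTriplePairAt L f) :=
  fun _ => by unfold IsTriplePairAt; infer_instance

namespace IsTriplePairAt

variable {L : Finset (Fin n)} {f : Pt n d → Pt n d} {t : Pt n d × Pt n d × Pt n d}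

theorem mem_sameBucketTriples (h : IsTriplePairAt L f t) : t ∈ sameBucketTriples d :=
  mem_filter.2 ⟨mem_univ _, h.2.2.2.1, h.2.2.2.2.1⟩

theorem apply_mem_sameBucketTriples (h : IsTriplePairAt L f t) :
    (f t.1, f t.2.1, f t.2.2) ∈ sameBucketTriples d :=
  mem_filter.2 ⟨mem_univ _, h.2.2.2.2.2.2.1, h.2.2.2.2.2.2.2.1⟩

end IsTriplePairAt

theorem card_filter_apply_triple_eq_mul_le {L : Finset (Fin n)} {f₀ : Pt n d → Pt n d}
    (hf₀ : f₀ ∈ restricted n d L) {t : Pt n d × Pt n d × Pt n d}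
    (ht : IsTriplePairAt L f₀ t) :
    #{f ∈ restricted n d L | (f t.1, f t.2.1, f t.2.2) = (f₀ t.1, f₀ t.2.1, f₀ t.2.2)} *
      (#(pointsOutside d L) - 6) ^ 3 ≤ #(restricted n d L) := by
  obtain ⟨h12, h13, h23, b2, b3, hL, c2, c3, hne⟩ := ht
  set A : Finset (Pt n d) := {t.1, t.2.1, t.2.2}
  have hA : #A = 3 := card_eq_three.2 ⟨_, _, _, h12, h13, h23, rfl⟩
  have hbucket : ∀ a ∈ A, a.1 = t.1.1 ∧ (f₀ a).1 = (f₀ t.1).1 := by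
    simp [A, ← b2, ← b3, ← c2, ← c3]
  have key := card_filter_eqOn_mul_le (restricted n d L) (pointsOutside d L)
    (fun f hf a ha b hb => swapConj_mem_restricted hf (by simpa [pointsOutside] using ha)
      (by simpa [pointsOutside] using hb))
    f₀ A (involutive_of_mem_restricted hf₀).injective.injOn
    (fun a ha => by simpa [pointsOutside, (hbucket a ha).2] using hL)
    (fun a ha h => hne ((hbucket a ha).2.symm.trans (hbucket _ h).1))
  have hfilter :
      {f ∈ restricted n d L | (f t.1, f t.2.1, f t.2.2) = (f₀ t.1, f₀ t.2.1, f₀ t.2.2)}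
        = {f ∈ restricted n d L | ∀ a ∈ A, f a = f₀ a} :=
    filter_congr fun f _ => by simp [A]
  rw [hA] at key
  rw [hfilter]
  -- the bounded quantifier is decided via `Fintype` here but via `Finset` in `key`
  convert key using 4

theorem card_filter_isTriplePairAt_mul_le (L : Finset (Fin n)) (t : Pt n d × Pt n d × Pt n d) :
    #{f ∈ restricted n d L | IsTriplePairAt L f t} * (#(pointsOutside d L) - 6) ^ 3
      ≤ #(sameBucketTriples d) * #(restricted n d L) := by
  rw [card_eq_sum_card_fiberwise (f := fun f => (f t.1, f t.2.1, f t.2.2))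
    (fun f hf => (mem_filter.1 hf).2.apply_mem_sameBucketTriples), sum_mul, ← smul_eq_mul,
    ← sum_const]
  refine sum_le_sum fun b _ => ?_
  rcases ({f ∈ {f ∈ restricted n d L | IsTriplePairAt L f t} |
      (f t.1, f t.2.1, f t.2.2) = b}).eq_empty_or_nonempty with h | ⟨f₀, hf₀⟩
  · simp [h]
  simp only [mem_filter] at hf₀
  obtain ⟨⟨hf₀, ht⟩, rfl⟩ := hf₀
  refine le_trans (Nat.mul_le_mul_right _ (card_le_card fun f hf => ?_))
    (card_filter_apply_triple_eq_mul_le hf₀ ht)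
  simp only [mem_filter] at hf ⊢
  exact ⟨hf.1.1, hf.2⟩

theorem sum_card_isTriplePairAt_mul_le (L : Finset (Fin n)) :
    (∑ f ∈ restricted n d L, #{t | IsTriplePairAt L f t}) *
      (#(pointsOutside d L) - 6) ^ 3
      ≤ (M n d * dmax d ^ 2) ^ 2 * #(restricted n d L) := by
  set Q := sameBucketTriples d
  have hdouble : ∑ f ∈ restricted n d L, #{t | IsTriplePairAt L f t}
      = ∑ t ∈ Q, #{f ∈ restricted n d L | IsTriplePairAt L f t} := by
    refine (sum_congr rfl fun f _ => congrArg card ?_).trans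
      (sum_card_bipartiteAbove_eq_sum_card_bipartiteBelow (IsTriplePairAt L))
    ext t
    simp only [bipartiteAbove, mem_filter, mem_univ, true_and]
    exact ⟨fun h => ⟨h.mem_sameBucketTriples, h⟩, And.right⟩
  calc (∑ f ∈ restricted n d L, #{t | IsTriplePairAt L f t}) *
        (#(pointsOutside d L) - 6) ^ 3
      = ∑ t ∈ Q, #{f ∈ restricted n d L | IsTriplePairAt L f t} *
        (#(pointsOutside d L) - 6) ^ 3 := by rw [hdouble, sum_mul]
    _ ≤ ∑ t ∈ Q, #Q * #(restricted n d L) :=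
        sum_le_sum fun t _ => card_filter_isTriplePairAt_mul_le L t
    _ = #Q * #Q * #(restricted n d L) := by rw [sum_const, smul_eq_mul, mul_assoc]
    _ ≤ (M n d * dmax d ^ 2) ^ 2 * #(restricted n d L) := by
        rw [sq]; gcongr <;> exact card_sameBucketTriples_le

theorem expec_le_of_sum_le {α : Type*} (s : Finset α) (X : α → ℕ) {c : ℝ} (hc : 0 ≤ c)
    (h : (∑ a ∈ s, X a : ℝ) ≤ c * #s) : expec s X ≤ c := by
  rcases (#s).eq_zero_or_pos with hs | hs
  · simp [expec, hs, hc]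
  · rw [expec, div_le_iff₀ (by exact_mod_cast hs)]
    exact h

theorem expec_restricted_le {L : Finset (Fin n)}
    (hG : M n d ≤ 2 * #(pointsOutside d L)) (hM : 24 ≤ M n d)
    (X : (Pt n d → Pt n d) → ℕ) (hX : ∀ f, X f ≤ #{t | IsTriplePairAt L f t}) :
    expec (restricted n d L) X ≤ 64 * dmax d ^ 4 / M n d := by
  have h4 : M n d ≤ 4 * (#(pointsOutside d L) - 6) := by omega
  have hcount :
      (∑ f ∈ restricted n d L, X f) * M n d ≤ 64 * dmax d ^ 4 * #(restricted n d L) := by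
    refine Nat.le_of_mul_le_mul_right ?_ (pow_pos (by omega : 0 < M n d) 2)
    calc (∑ f ∈ restricted n d L, X f) * M n d * M n d ^ 2
        = (∑ f ∈ restricted n d L, X f) * M n d ^ 3 := by ring
      _ ≤ (∑ f ∈ restricted n d L, #{t | IsTriplePairAt L f t}) *
          (4 * (#(pointsOutside d L) - 6)) ^ 3 := by
          gcongr with f
          exact hX f
      _ = 64 * ((∑ f ∈ restricted n d L, #{t | IsTriplePairAt L f t}) *
          (#(pointsOutside d L) - 6) ^ 3) := by ring
      _ ≤ 64 * ((M n d * dmax d ^ 2) ^ 2 * #(restricted n d L)) :=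
          Nat.mul_le_mul_left _ (sum_card_isTriplePairAt_mul_le L)
      _ = 64 * dmax d ^ 4 * #(restricted n d L) * M n d ^ 2 := by ring
  refine expec_le_of_sum_le _ X (by positivity) ?_
  rw [div_mul_eq_mul_div, le_div_iff₀ (by exact_mod_cast (by omega : 0 < M n d))]
  exact_mod_cast hcount

theorem numMixedTriples_le_card (L : Finset (Fin n)) (f : Pt n d → Pt n d) :
    numMixedTriples L f ≤ #{t | IsTriplePairAt L f t} := by
  refine (Nat.div_le_self _ _).trans (card_le_card fun t ht => ?_)
  simp only [mem_filter, mem_univ, true_and] at ht ⊢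
  obtain ⟨h12, h13, h23, b2, b3, hL, hfL, c2, c3⟩ := ht
  exact ⟨h12, h13, h23, b2, b3, hfL, c2, c3, fun h => hfL (h ▸ hL)⟩

theorem numPureTriples_le_card (L : Finset (Fin n)) (f : Pt n d → Pt n d) :
    numPureTriples L f ≤ #{t | IsTriplePairAt L f t} := by
  refine (Nat.div_le_self _ _).trans (card_le_card fun t ht => ?_)
  simp only [mem_filter, mem_univ, true_and] at ht ⊢
  obtain ⟨h12, h13, h23, b2, b3, -, hfL, c2, c3, hne⟩ := ht
  exact ⟨h12, h13, h23, b2, b3, hfL, c2, c3, hne⟩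

/-- **Lemma 1**: `E[T₁] = O(d_max⁴/M)` and `E[T₂] = O(d_max⁴/M)`. -/
theorem expected_triple_pairs :
    ∃ C : ℝ, 0 < C ∧ ∃ δ : ℝ, 0 < δ ∧
      ∀ (n : ℕ) (d : Fin n → ℕ) (L R : Finset (Fin n)),
        Disjoint L R → L ∪ R = Finset.univ →
        Even (M n d) →
        M1 d L ≤ M1 d R →
        (dmax d : ℝ) ^ 4 ≤ δ * (M n d : ℝ) →
        expec (restricted n d L) (numMixedTriples L) ≤ C * (dmax d : ℝ) ^ 4 / (M n d : ℝ) ∧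
        expec (restricted n d L) (numPureTriples L) ≤ C * (dmax d : ℝ) ^ 4 / (M n d : ℝ) := by
  refine ⟨64, by norm_num, 1 / 24, by norm_num, ?_⟩
  intro n d L R hdisj hunion _ hLR hδ
  rcases (M n d).eq_zero_or_pos with hM | hM
  · have : IsEmpty (Pt n d) := Fintype.card_eq_zero_iff.1 (card_pt.trans hM)
    simp [expec, numMixedTriples, numPureTriples, hM]
  have h24 : 24 ≤ M n d := by
    have : (1 : ℝ) ≤ (dmax d : ℝ) ^ 4 := one_le_pow₀ (by exact_mod_cast one_le_dmax hM)
    exact_mod_cast (by linarith : (24 : ℝ) ≤ M n d)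
  have hG := M_le_two_mul_card_pointsOutside hdisj hunion hLR
  exact ⟨expec_restricted_le hG h24 _ (numMixedTriples_le_card L),
    expec_restricted_le hG h24 _ (numPureTriples_le_card L)⟩

end RandomBGraph
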